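/- arXiv:1710.02886 — 4 statements merged into one kernel-verified Lean document; each statement's English description precedes it below -/
import Mathlib

section
/- (One-dimensional Kitchens theorem for one-sided group shifts) Let A be a finite group and let G ⊆ A^ℕ be a subset that is simultaneously a subgroup of the direct product group A^ℕ (with coordinatewise multiplication) and a subshift (i.e., closed in the product topology and invariant under the shift map σ(f)(n) = f(n+1)). Then G is a shift of finite type: there exists m such that G = { f ∈ A^ℕ : every length-m window of f appears as a length-m window in some element of G }. -/
/-- Auxiliary: elements of `A` that can appear at coordinate `k` of an element of `G`
whose first `k` coordinates are all `1`. -/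
def Eset {A : Type*} [Group A] (G : Set (ℕ → A)) (k : ℕ) : Set A :=
  {a | ∃ c ∈ G, (∀ i < k, c i = 1) ∧ c k = a}

lemma mem_Eset {A : Type*} [Group A] (G : Set (ℕ → A)) (k : ℕ) (a : A) :
    a ∈ Eset G k ↔ ∃ c ∈ G, (∀ i < k, c i = 1) ∧ c k = a := Iff.rfl

/-- Kitchens' theorem for one-sided one-dimensional group shifts:
a closed shift-invariant subgroup of `A^ℕ` is a shift of finite type. -/
theorem stmt9 {A : Type*} [Group A] [Finite A]
    [TopologicalSpace A] [DiscreteTopology A]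
    (G : Set (ℕ → A))
    (hone : (fun _ => 1) ∈ G)
    (hmul : ∀ f ∈ G, ∀ g ∈ G, (fun n => f n * g n) ∈ G)
    (hinv : ∀ f ∈ G, (fun n => (f n)⁻¹) ∈ G)
    (hclosed : IsClosed G)
    (hshift : ∀ f ∈ G, (fun n => f (n + 1)) ∈ G) :
    ∃ m : ℕ,
      G = {f : ℕ → A | ∀ i : ℕ, ∃ g ∈ G, ∃ j : ℕ,
            ∀ t : ℕ, t < m → f (i + t) = g (j + t)} := by
  classical
  -- iterated shifts stay in G
  have hshiftk : ∀ g ∈ G, ∀ k : ℕ, (fun n => g (n + k)) ∈ G := by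
    intro g hg k
    induction k with
    | zero => simpa using hg
    | succ k ih =>
      have h1 := hshift _ ih
      have h2 : (fun n => g (n + 1 + k)) = (fun n => g (n + (k + 1))) := by
        funext n; congr 1; omega
      rw [← h2]; exact h1
  -- Eset is antitone
  have hEsucc : ∀ k, Eset G (k + 1) ⊆ Eset G k := by
    rintro k a ⟨c, hc, hc1, hck⟩
    exact ⟨fun t => c (t + 1), hshift c hc, fun i hi => hc1 (i + 1) (by omega), hck⟩
  have hEanti : ∀ j k : ℕ, j ≤ k → Eset G k ⊆ Eset G j := by
    intro j k hjk
    induction hjk with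
    | refl => exact fun a ha => ha
    | @step p hp ih => exact (hEsucc p).trans ih
  -- stabilization
  obtain ⟨m, hm⟩ : ∃ m : ℕ, ∀ n : ℕ, (Eset G m).ncard ≤ (Eset G n).ncard := by
    have h1 : sInf (Set.range fun k => (Eset G k).ncard) ∈
        Set.range fun k => (Eset G k).ncard := Nat.sInf_mem ⟨_, 0, rfl⟩
    obtain ⟨m, hm⟩ := h1
    refine ⟨m, fun n => ?_⟩
    have hm' : (Eset G m).ncard = sInf (Set.range fun k => (Eset G k).ncard) := hm
    rw [hm']
    exact Nat.sInf_le ⟨n, rfl⟩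
  have hstab : ∀ n, m ≤ n → Eset G n = Eset G m := fun n hn =>
    Set.eq_of_subset_of_ncard_le (hEanti m n hn) (hm n) (Set.toFinite _)
  refine ⟨m + 1, ?_⟩
  ext f
  simp only [Set.mem_setOf_eq]
  constructor
  · intro hf i
    exact ⟨f, hf, i, fun t _ => rfl⟩
  · intro hf
    -- normalize windows to position 0
    have hf' : ∀ i : ℕ, ∃ h ∈ G, ∀ t < m + 1, f (i + t) = h t := by
      intro i
      obtain ⟨g, hg, j, hgw⟩ := hf i
      refine ⟨fun n => g (n + j), hshiftk g hg j, fun t ht => ?_⟩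
      rw [hgw t ht]; congr 1; omega
    -- all prefixes of f are realizable in G
    have hpref : ∀ n : ℕ, ∃ g ∈ G, ∀ i < n, g i = f i := by
      intro n
      induction n with
      | zero => exact ⟨_, hone, fun i hi => absurd hi (Nat.not_lt_zero i)⟩
      | succ n ih =>
        obtain ⟨g, hg, hgf⟩ := ih
        by_cases hn : n < m + 1
        · obtain ⟨h, hh, hw⟩ := hf' 0
          refine ⟨h, hh, fun i hi => ?_⟩
          have := hw i (by omega)
          rw [zero_add] at this
          exact this.symm
        · have hmn : m ≤ n := by omega
          obtain ⟨h, hh, hw⟩ := hf' (n - m)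
          have hg2 : (fun t => g (t + (n - m))) ∈ G := hshiftk g hg (n - m)
          have hc : (fun t => (g (t + (n - m)))⁻¹ * h t) ∈ G := hmul _ (hinv _ hg2) _ hh
          have haEm : (g n)⁻¹ * f n ∈ Eset G m := by
            refine ⟨_, hc, fun i hi => ?_, ?_⟩
            · have h1 : g (i + (n - m)) = f (i + (n - m)) := hgf _ (by omega)
              have h2 : f (n - m + i) = h i := hw i (by omega)
              rw [h1, show i + (n - m) = n - m + i by omega, h2, inv_mul_cancel]
            · have h3 : f (n - m + m) = h m := hw m (by omega)
              rw [show m + (n - m) = n by omega, ← h3, show n - m + m = n by omega]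
          have haEn : (g n)⁻¹ * f n ∈ Eset G n := by
            rw [hstab n hmn]; exact haEm
          obtain ⟨d, hd, hd1, hdn⟩ := haEn
          refine ⟨fun t => g t * d t, hmul _ hg _ hd, fun i hi => ?_⟩
          rcases Nat.lt_succ_iff_lt_or_eq.mp hi with h' | h'
          · show g i * d i = f i
            rw [hd1 i h', mul_one, hgf i h']
          · subst h'
            show g i * d i = f i
            rw [hdn, mul_inv_cancel_left]
    choose gs hgsG hgsf using hpref
    have htend : Filter.Tendsto gs Filter.atTop (nhds f) := by
      rw [tendsto_pi_nhds]
      intro i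
      refine Filter.Tendsto.congr' ?_ tendsto_const_nhds
      filter_upwards [Filter.eventually_ge_atTop (i + 1)] with n hn
      exact (hgsf n i (by omega)).symm
    exact hclosed.mem_of_tendsto htend (Filter.Eventually.of_forall hgsG)
end

section
/- The closure of the odometer group in Aut({0,1}^*) is not a finitely constrained group: there is no finite set F of forbidden finite patterns such that the closure of ⟨a⟩ equals the set of all tree automorphisms whose portraits avoid every pattern in F. Concretely: for every n, there is an element g of Aut({0,1}^*) all of whose portrait-patterns of size n+1 appear in portraits of powers of a, yet g is not in the closure of ⟨a⟩. -/
variable {X A : Type*}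

namespace TreeShift

/-- Section of a configuration at a word: `g_u(w) = g(uw)`. -/
def sec (g : List X → A) (u : List X) : List X → A := fun w => g (u ++ w)

variable [Group A] [MulAction A X]

/-- The tree action of a configuration: `g(ε)=ε`, `g(xw) = (g(ε)•x)(g_x(w))`. -/
def act : (List X → A) → List X → List X
  | _, [] => []
  | g, x :: w => (g [] • x) :: act (fun u => g (x :: u)) w

/-- Multiplication in the iterated wreath product: `(gh)(w) = g(h(w)) * h(w)`. -/
def tmul (g h : List X → A) : List X → A := fun w => g (act h w) * h w

/-- The inverse tree action. -/
def invAct : (List X → A) → List X → List X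
  | _, [] => []
  | g, x :: w => ((g [])⁻¹ • x) :: invAct (fun u => g (((g [])⁻¹ • x) :: u)) w

/-- Inversion in the iterated wreath product. -/
def tinv (g : List X → A) : List X → A := fun v => (g (invAct g v))⁻¹

/-- Grafting `g` at the vertex `v`: label `g(z)` at `vz`, identity elsewhere. -/
def graft [DecidableEq X] (v : List X) (g : List X → A) : List X → A :=
  fun w => if v <+: w then g (w.drop v.length) else 1

/-- The binary odometer `a = σ(e,a)`: its portrait has label `σ` exactly at
the words `1^n`. -/
def odo : List Bool → Equiv.Perm Bool :=
  fun w => if ∀ b ∈ w, b = true then Equiv.swap false true else 1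

/-- Nonnegative powers of the odometer in the wreath product. -/
def apow : ℕ → (List Bool → Equiv.Perm Bool)
  | 0 => fun _ => 1
  | n + 1 => tmul odo (apow n)

/-- Integer powers of the odometer (the cyclic group it generates). -/
def apowz : ℤ → (List Bool → Equiv.Perm Bool)
  | Int.ofNat n => apow n
  | Int.negSucc n => tinv (apow (n + 1))

instance : TopologicalSpace (Equiv.Perm Bool) := ⊥

instance : DiscreteTopology (Equiv.Perm Bool) := ⟨rfl⟩


local notation "σσ" => Equiv.swap false true

lemma odo_nil : odo [] = σσ := by simp [odo]
lemma odo_true (w : List Bool) : odo (true :: w) = odo w := by simp [odo]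
lemma odo_false (w : List Bool) : odo (false :: w) = 1 := by simp [odo]

lemma swap_pow (k : ℕ) : σσ ^ k = if Even k then 1 else σσ := by
  induction k with
  | zero => simp
  | succ k ih =>
    by_cases h : Even k <;>
      simp [pow_succ, ih, h, Nat.even_add_one, Equiv.swap_mul_self]

lemma apow_nil (k : ℕ) : apow k [] = σσ ^ k := by
  induction k with
  | zero => simp [apow]
  | succ k ih => simp [apow, tmul, act, odo_nil, ih, pow_succ]; group

lemma apow_cons (k : ℕ) :
    (∀ w, apow k (false :: w) = apow (k / 2) w) ∧
    (∀ w, apow k (true :: w) = apow ((k + 1) / 2) w) := by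
  induction k with
  | zero => exact ⟨fun w => rfl, fun w => rfl⟩
  | succ k ih =>
    have hf : (fun u => apow k (false :: u)) = apow (k / 2) := funext ih.1
    have ht : (fun u => apow k (true :: u)) = apow ((k + 1) / 2) := funext ih.2
    by_cases hk : Even k
    · have hk2 : k % 2 = 0 := Nat.even_iff.mp hk
      constructor
      · intro w
        have h1 : (k + 1) / 2 = k / 2 := by omega
        show odo (act (apow k) (false :: w)) * apow k (false :: w) = _
        rw [show act (apow k) (false :: w)
              = (apow k [] • false) :: act (fun u => apow k (false :: u)) w from rfl,
          apow_nil, swap_pow, if_pos hk]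
        simp only [one_smul, odo_false, one_mul, ih.1, h1]
      · intro w
        have h1 : (k + 1) / 2 = k / 2 := by omega
        have h2 : (k + 1 + 1) / 2 = k / 2 + 1 := by omega
        show odo (act (apow k) (true :: w)) * apow k (true :: w) = _
        rw [show act (apow k) (true :: w)
              = (apow k [] • true) :: act (fun u => apow k (true :: u)) w from rfl,
          apow_nil, swap_pow, if_pos hk, ht]
        simp only [one_smul, odo_true, ih.2, h1, h2]
        rfl
    · have hk2 : k % 2 = 1 := Nat.odd_iff.mp (Nat.not_even_iff_odd.mp hk)
      constructor
      · intro w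
        have h1 : (k + 1) / 2 = k / 2 + 1 := by omega
        show odo (act (apow k) (false :: w)) * apow k (false :: w) = _
        rw [show act (apow k) (false :: w)
              = (apow k [] • false) :: act (fun u => apow k (false :: u)) w from rfl,
          apow_nil, swap_pow, if_neg hk, hf]
        have : σσ • false = true := Equiv.swap_apply_left false true
        rw [this, odo_true, ih.1 w, h1]
        rfl
      · intro w
        have h1 : (k + 1 + 1) / 2 = (k + 1) / 2 := by omega
        show odo (act (apow k) (true :: w)) * apow k (true :: w) = _
        rw [show act (apow k) (true :: w)
              = (apow k [] • true) :: act (fun u => apow k (true :: u)) w from rfl,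
          apow_nil, swap_pow, if_neg hk]
        have : σσ • true = false := Equiv.swap_apply_right false true
        rw [this, odo_false, one_mul, ih.2 w, h1]

lemma apow_two_mul (j : ℕ) (b : Bool) (w : List Bool) :
    apow (2 * j) (b :: w) = apow j w := by
  cases b
  · rw [(apow_cons (2 * j)).1 w]; congr 1; omega
  · rw [(apow_cons (2 * j)).2 w]; congr 1; omega

lemma apow_sec (v : List Bool) (k : ℕ) : ∃ j, ∀ u, apow k (v ++ u) = apow j u := by
  induction v generalizing k with
  | nil => exact ⟨k, fun u => rfl⟩
  | cons b v ih =>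
    cases b
    · obtain ⟨j, hj⟩ := ih (k / 2)
      exact ⟨j, fun u => by rw [List.cons_append, (apow_cons k).1, hj]⟩
    · obtain ⟨j, hj⟩ := ih ((k + 1) / 2)
      exact ⟨j, fun u => by rw [List.cons_append, (apow_cons k).2, hj]⟩

lemma apow_pow_small (v : List Bool) : ∀ m : ℕ, v.length < m → apow (2 ^ m) v = 1 := by
  induction v with
  | nil =>
    intro m hm
    rw [apow_nil, swap_pow, if_pos]
    exact (Nat.even_pow' (by omega)).mpr even_two
  | cons b v ih =>
    intro m hm
    obtain ⟨m', rfl⟩ : ∃ m', m = m' + 1 := ⟨m - 1, by omega⟩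
    rw [pow_succ, mul_comm, apow_two_mul]
    exact ih m' (by simpa using Nat.lt_of_succ_lt_succ hm)

lemma apow_ones (n : ℕ) : apow (2 ^ n) (List.replicate n true) = σσ := by
  induction n with
  | zero => rw [List.replicate_zero, apow_nil]; norm_num
  | succ n ih =>
    rw [List.replicate_succ, pow_succ, mul_comm, apow_two_mul, ih]

lemma apowz_ofNat (m : ℕ) : apowz (Int.ofNat m) = apow m := rfl

lemma apowz_nil (k : ℤ) : apowz k [] = if Even k then 1 else σσ := by
  cases k with
  | ofNat n =>
    rw [apowz_ofNat, apow_nil, swap_pow]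
    congr 1
    simp [Int.even_coe_nat]
  | negSucc n =>
    show tinv (apow (n + 1)) [] = _
    have h0 : invAct (apow (n + 1)) ([] : List Bool) = [] := rfl
    show (apow (n + 1) (invAct (apow (n + 1)) [])) ⁻¹ = _
    rw [h0, apow_nil, swap_pow]
    have : Even (Int.negSucc n) ↔ Even (n + 1) := by
      rw [Int.negSucc_eq]
      rw [even_neg]
      exact_mod_cast Int.even_coe_nat (n + 1)
    by_cases h : Even (n + 1)
    · simp [h, this.mpr h]
    · simp [h, (not_iff_not.mpr this).mpr h]

lemma tinv_two_mul (m : ℕ) (b : Bool) (w : List Bool) :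
    tinv (apow (2 * m)) (b :: w) = tinv (apow m) w := by
  have hroot : (apow (2 * m) [])⁻¹ = 1 := by
    rw [apow_nil, swap_pow, if_pos (even_two_mul m), inv_one]
  have hsec : (fun u => apow (2 * m) (b :: u)) = apow m :=
    funext fun u => apow_two_mul m b u
  have hact : invAct (apow (2 * m)) (b :: w) = b :: invAct (apow m) w := by
    show ((apow (2 * m) [])⁻¹ • b) ::
        invAct (fun u => apow (2 * m) (((apow (2 * m) [])⁻¹ • b) :: u)) w = _
    rw [hroot, one_smul, hsec]
  show (apow (2 * m) (invAct (apow (2 * m)) (b :: w)))⁻¹ = _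
  rw [hact, apow_two_mul]
  rfl

lemma apowz_two_mul (j : ℤ) (b : Bool) (w : List Bool) :
    apowz (2 * j) (b :: w) = apowz j w := by
  cases j with
  | ofNat m =>
    have h : (2 * Int.ofNat m) = Int.ofNat (2 * m) := by
      simp only [Int.ofNat_eq_natCast]; push_cast; ring
    rw [h, apowz_ofNat, apowz_ofNat, apow_two_mul]
  | negSucc m =>
    have h : (2 * Int.negSucc m) = Int.negSucc (2 * m + 1) := by
      rw [Int.negSucc_eq, Int.negSucc_eq]; push_cast; ring
    rw [h]
    show tinv (apow (2 * m + 1 + 1)) (b :: w) = tinv (apow (m + 1)) w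
    rw [show 2 * m + 1 + 1 = 2 * (m + 1) by ring, tinv_two_mul]

lemma sigma_ne_one : σσ ≠ 1 := by decide

/-- The witness element `g = (e, a^{2^n})`. -/
def gg (n : ℕ) : List Bool → Equiv.Perm Bool
  | [] => 1
  | false :: _ => 1
  | true :: u => apow (2 ^ n) u

lemma gg_key (n : ℕ) (w : List Bool) :
    ∃ j : ℕ, ∀ u, u.length ≤ n → gg n (w ++ u) = apow j u := by
  match w with
  | [] =>
    refine ⟨0, fun u hu => ?_⟩
    match u with
    | [] => rfl
    | false :: u' => rfl
    | true :: u' =>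
      show apow (2 ^ n) u' = 1
      exact apow_pow_small u' n (by simpa using hu)
  | false :: w' => exact ⟨0, fun u _ => rfl⟩
  | true :: w' =>
    obtain ⟨j, hj⟩ := apow_sec w' (2 ^ n)
    exact ⟨j, fun u _ => hj u⟩

lemma isOpen_eval (w : List Bool) (c : Equiv.Perm Bool) :
    IsOpen {f : List Bool → Equiv.Perm Bool | f w = c} := by
  have h : {f : List Bool → Equiv.Perm Bool | f w = c}
      = (fun f : List Bool → Equiv.Perm Bool => f w) ⁻¹' {c} := rfl
  rw [h]
  exact (isOpen_discrete _).preimage (continuous_apply w)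

lemma gg_not_mem (n : ℕ) :
    gg n ∉ closure {f : List Bool → Equiv.Perm Bool | ∃ k : ℤ, f = apowz k} := by
  intro hmem
  rw [mem_closure_iff] at hmem
  set U : Set (List Bool → Equiv.Perm Bool) :=
    {f | f [] = 1} ∩ ({f | f (false :: List.replicate n true) = 1} ∩
      {f | f (true :: List.replicate n true) = σσ}) with hU
  have hopen : IsOpen U :=
    (isOpen_eval _ _).inter ((isOpen_eval _ _).inter (isOpen_eval _ _))
  have hgU : gg n ∈ U := by
    refine ⟨rfl, rfl, ?_⟩
    show apow (2 ^ n) (List.replicate n true) = σσ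
    exact apow_ones n
  obtain ⟨f, hfU, k, rfl⟩ := hmem U hopen hgU
  obtain ⟨h1, h2, h3⟩ := hfU
  simp only [Set.mem_setOf_eq] at h1 h2 h3
  have hek : Even k := by
    by_contra he
    rw [apowz_nil, if_neg he] at h1
    exact sigma_ne_one h1
  obtain ⟨j, rfl⟩ : ∃ j, k = 2 * j := by
    obtain ⟨r, hr⟩ := hek; exact ⟨r, by omega⟩
  rw [apowz_two_mul] at h2
  rw [apowz_two_mul] at h3
  rw [h2] at h3
  exact sigma_ne_one h3.symm

/-- the closure of the odometer group is not finitely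
constrained: no pattern size `m+1` defines it, and, concretely, for every `n`
the element `g = (e, a^{2^n})` has all of its patterns of size `n+1`
appearing in portraits of powers of `a`, yet `g` is not in the closure. -/
theorem stmt13 :
    (¬ ∃ m : ℕ,
        closure {f | ∃ k : ℤ, f = apowz k} =
          {f : List Bool → Equiv.Perm Bool | ∀ w : List Bool,
            ∃ h ∈ closure {f | ∃ k : ℤ, f = apowz k},
              ∀ u : List Bool, u.length ≤ m → f (w ++ u) = h u}) ∧
    ∀ n : ℕ, ∃ g : List Bool → Equiv.Perm Bool,
      g [] = 1 ∧
      (∀ u : List Bool, g (false :: u) = 1) ∧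
      (∀ u : List Bool, g (true :: u) = apow (2 ^ n) u) ∧
      (∀ w : List Bool, ∃ (k : ℤ) (v : List Bool),
          ∀ u : List Bool, u.length ≤ n → g (w ++ u) = apowz k (v ++ u)) ∧
      g ∉ closure {f | ∃ k : ℤ, f = apowz k} := by
  have main : ∀ n : ℕ,
      (∀ w : List Bool, ∃ (k : ℤ) (v : List Bool),
          ∀ u : List Bool, u.length ≤ n → gg n (w ++ u) = apowz k (v ++ u)) := by
    intro n w
    obtain ⟨j, hj⟩ := gg_key n w
    exact ⟨Int.ofNat j, [], fun u hu => by
      rw [List.nil_append, apowz_ofNat]; exact hj u hu⟩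
  constructor
  · rintro ⟨m, hm⟩
    apply gg_not_mem m
    rw [hm]
    intro w
    obtain ⟨j, hj⟩ := gg_key m w
    exact ⟨apow j, subset_closure ⟨Int.ofNat j, rfl⟩, hj⟩
  · intro n
    exact ⟨gg n, rfl, fun u => rfl, fun u => rfl, main n, gg_not_mem n⟩

end TreeShift
end

section
/- Let G ≤ A^{X^*} be a subgroup of the iterated wreath product such that the normalizer of G in A^{X^*} contains a self-similar, self-replicating, level-transitive subgroup M. If δ_u(g) ∈ G for some g ∈ G and some word u of length n, then δ_v(g) ∈ G for every word v of length n. -/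
variable {X A : Type*}

namespace TreeShift

variable [Group A] [MulAction A X]

set_option linter.unusedSectionVars false
set_option linter.unusedVariables false


theorem act_cons (g : List X → A) (x : X) (w : List X) :
    act g (x :: w) = (g [] • x) :: act (fun u => g (x :: u)) w := rfl

theorem act_one : ∀ w : List X, act (fun _ => (1:A)) w = w
  | [] => rfl
  | x :: w => by rw [act_cons, act_one w, one_smul]

theorem act_append (h : List X → A) (v z : List X) :
    act h (v ++ z) = act h v ++ act (sec h v) z := by
  induction v generalizing h with
  | nil => rfl
  | cons a v ih =>
      show act h (a :: (v ++ z)) = _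
      rw [act_cons, act_cons]
      rw [ih (fun u => h (a :: u))]
      rfl

theorem sec_tmul (g h : List X → A) (w : List X) :
    sec (tmul g h) w = tmul (sec g (act h w)) (sec h w) := by
  funext z
  simp only [sec, tmul, act_append]

theorem act_tmul (g h : List X → A) : ∀ w : List X, act (tmul g h) w = act g (act h w)
  | [] => rfl
  | x :: w => by
      rw [act_cons]
      have h1 : (fun u => tmul g h (x :: u)) = tmul (sec g (act h [x])) (sec h [x]) :=
        sec_tmul g h [x]
      rw [h1, act_tmul _ _ w]
      have h2 : act h (x :: w) = (h [] • x) :: act (sec h [x]) w := rfl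
      rw [h2, act_cons]
      have h3 : tmul g h [] = g [] * h [] := by simp [tmul]; rfl
      rw [h3, mul_smul]
      rfl

theorem invAct_cons (g : List X → A) (x : X) (w : List X) :
    invAct g (x :: w) = ((g [])⁻¹ • x) :: invAct (fun u => g (((g [])⁻¹ • x) :: u)) w := rfl

theorem invAct_act (g : List X → A) : ∀ w : List X, invAct g (act g w) = w
  | [] => rfl
  | x :: w => by
      rw [act_cons, invAct_cons, inv_smul_smul]
      rw [invAct_act _ w]

theorem act_invAct (g : List X → A) : ∀ w : List X, act g (invAct g w) = w
  | [] => rfl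
  | x :: w => by
      rw [invAct_cons, act_cons, smul_inv_smul]
      rw [act_invAct _ w]

theorem tinv_tmul (g : List X → A) : tmul (tinv g) g = fun _ => 1 := by
  funext w
  simp [tmul, tinv, invAct_act]

theorem sec_tinv (g : List X → A) (x : X) :
    (fun u => tinv g (x :: u)) = tinv (fun u => g (((g [])⁻¹ • x) :: u)) := by
  funext z
  simp only [tinv, invAct_cons]

theorem act_tinv (g : List X → A) : ∀ w : List X, act (tinv g) w = invAct g w
  | [] => rfl
  | x :: w => by
      rw [act_cons, invAct_cons]
      have h0 : tinv g [] = (g [])⁻¹ := rfl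
      rw [h0, sec_tinv, act_tinv _ w]

theorem tmul_tinv (g : List X → A) : tmul g (tinv g) = fun _ => 1 := by
  funext w
  simp [tmul, tinv, act_tinv, act_invAct]

theorem tmul_assoc (a b c : List X → A) : tmul (tmul a b) c = tmul a (tmul b c) := by
  funext w
  simp [tmul, act_tmul, mul_assoc]

theorem one_tmul (a : List X → A) : tmul (fun _ => 1) a = a := by
  funext w; simp [tmul]

theorem tmul_one (a : List X → A) : tmul a (fun _ => 1) = a := by
  funext w; simp [tmul, act_one]

theorem tinv_tinv (s : List X → A) : tinv (tinv s) = s := by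
  have h1 : tmul (tmul s (tinv s)) (tinv (tinv s)) = tinv (tinv s) := by
    rw [tmul_tinv, one_tmul]
  rw [tmul_assoc, tmul_tinv, tmul_one] at h1
  exact h1.symm


section
variable [DecidableEq X]

theorem graft_nil (g : List X → A) : graft ([] : List X) g = g := by
  funext w; simp [graft]

theorem graft_cons_nil (a : X) (u : List X) (g : List X → A) :
    graft (a :: u) g [] = 1 := by
  simp [graft]

theorem graft_cons_cons (a : X) (u : List X) (g : List X → A) (x : X) (w : List X) :
    graft (a :: u) g (x :: w) = if x = a then graft u g w else 1 := by
  simp only [graft, List.cons_prefix_cons, List.length_cons, List.drop_succ_cons]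
  by_cases h : x = a
  · subst h; simp
  · simp only [if_neg h]
    rw [if_neg]
    intro ⟨h1,_⟩; exact h h1.symm

theorem act_graft (u : List X) (g : List X → A) :
    ∀ z : List X, act (graft u g) z =
      if u <+: z then u ++ act g (z.drop u.length) else z := by
  induction u with
  | nil => intro z; simp [graft_nil]
  | cons a u ih =>
      intro z
      cases z with
      | nil => simp [act]
      | cons x z =>
          rw [act_cons, graft_cons_nil, one_smul]
          have hfun : (fun t => graft (a :: u) g (x :: t)) =
              (if x = a then graft u g else fun _ => 1) := by
            funext t
            rw [graft_cons_cons]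
            by_cases h : x = a <;> simp [h]
          by_cases h : x = a
          · subst h
            rw [hfun]; rw [if_pos rfl]
            rw [ih z]
            by_cases hp : u <+: z
            · simp [hp, List.cons_prefix_cons]
            · simp [hp, List.cons_prefix_cons]
          · rw [hfun]; simp only [if_neg h]
            rw [act_one]
            have : ¬ (a :: u <+: x :: z) := by
              simp [List.cons_prefix_cons]; intro hax; exact absurd hax.symm h
            simp [this]

theorem graft_append (u : List X) (g : List X → A) (z : List X) :
    graft u g (u ++ z) = g z := by
  simp [graft]

theorem graft_not_prefix (u : List X) (g : List X → A) (w : List X) (h : ¬ u <+: w) :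
    graft u g w = 1 := by
  simp [graft, h]

theorem invAct_act_append (h : List X → A) (v z : List X) :
    invAct h (act h v ++ z) = v ++ invAct (sec h v) z := by
  have h1 : act h (v ++ invAct (sec h v) z) = act h v ++ z := by
    rw [act_append, act_invAct]
  rw [← h1, invAct_act]

theorem tinv_act_append (h : List X → A) (v z : List X) :
    tinv h (act h v ++ z) = tinv (sec h v) z := by
  simp only [tinv, invAct_act_append]
  rfl

theorem conj_graft (h : List X → A) (v u : List X) (g : List X → A)
    (hact : act h v = u) :
    tmul (tmul (tinv h) (graft u g)) h =
      graft v (tmul (tmul (tinv (sec h v)) g) (sec h v)) := by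
  subst hact
  funext w
  set s := sec h v with hs
  by_cases hvw : v <+: w
  · obtain ⟨w', rfl⟩ := hvw
    have hw : act h (v ++ w') = act h v ++ act s w' := act_append h v w'
    simp only [tmul, hw, graft_append]
    rw [act_graft]
    have hp : act h v <+: act h v ++ act g (
      (act h v ++ act s w').drop (act h v).length) := by
      simp
    rw [if_pos (by exact ⟨act s w', rfl⟩)]
    rw [List.drop_left]
    rw [tinv_act_append]
    rfl
  · have hnp : ¬ (act h v <+: act h w) := by
      intro ⟨z, hz⟩
      apply hvw
      have : w = invAct h (act h w) := (invAct_act h w).symm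
      rw [this, ← hz, invAct_act_append]
      exact ⟨_, rfl⟩
    simp only [tmul]
    rw [graft_not_prefix _ _ _ hnp, act_graft, if_neg hnp]
    have : tinv h (act h w) = (h w)⁻¹ := by
      simp [tinv, invAct_act]
    rw [this, graft_not_prefix _ _ _ hvw]
    simp
end

/-- if the normalizer of `G` contains a self-similar,
self-replicating, level-transitive subgroup, then graftings of an element of
`G` at one vertex of level `n` can be moved to any vertex of level `n`. -/
theorem stmt16 [Finite X] [Finite A] [DecidableEq X]
    (G M : Set (List X → A))
    (hGone : (fun _ => 1) ∈ G)
    (hGmul : ∀ g ∈ G, ∀ h ∈ G, tmul g h ∈ G)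
    (hGinv : ∀ g ∈ G, tinv g ∈ G)
    (hMone : (fun _ => 1) ∈ M)
    (hMmul : ∀ g ∈ M, ∀ h ∈ M, tmul g h ∈ M)
    (hMinv : ∀ g ∈ M, tinv g ∈ M)
    (hnorm : ∀ h ∈ M, ∀ g ∈ G, tmul (tmul (tinv h) g) h ∈ G)
    (hss : ∀ h ∈ M, ∀ w : List X, sec h w ∈ M)
    (hsr : ∀ u : List X, ∀ g ∈ M, ∃ h ∈ M, act h u = u ∧ sec h u = g)
    (hlt : ∀ u v : List X, u.length = v.length → ∃ h ∈ M, act h u = v)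
    (g : List X → A) (hg : g ∈ G) (n : ℕ)
    (u : List X) (hu : u.length = n) (hgu : graft u g ∈ G) :
    ∀ v : List X, v.length = n → graft v g ∈ G := by
  intro v hv
  obtain ⟨h, hhM, hact⟩ := hlt v u (hv.trans hu.symm)
  have hsM := hss h hhM v
  set s := sec h v with hs
  have step1 : graft v (tmul (tmul (tinv s) g) s) ∈ G := by
    have h1 := hnorm h hhM (graft u g) hgu
    rwa [conj_graft h v u g hact] at h1
  obtain ⟨k, hkM, hkfix, hksec⟩ := hsr v (tinv s) (hMinv s hsM)
  have step2 := hnorm k hkM _ step1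
  rw [conj_graft k v v _ hkfix, hksec] at step2
  have key : tmul (tmul (tinv (tinv s)) (tmul (tmul (tinv s) g) s)) (tinv s) = g := by
    rw [tinv_tinv, ← tmul_assoc, ← tmul_assoc, tmul_tinv, one_tmul, tmul_assoc,
      tmul_tinv, tmul_one]
  rwa [key] at step2

end TreeShift
end

section
/- Let B be a subgroup of the finite group A, and let H_B ⊆ A^{X^*} consist of all elements h such that there exists N with h(v) ∈ B for all words v of length > N. Then H_B is a self-similar subgroup of the iterated wreath product A^{X^*} which is dense in A^{X^*} when A^{X^*} is taken with the prodiscrete topology; in particular, if B ≠ A then H_B is a proper dense (hence non-closed) subgroup. -/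
variable {X A : Type*}

namespace TreeShift

variable [Group A] [MulAction A X]

/-- The set `H_B` of configurations whose labels eventually lie in `B`. -/
def HB (B : Subgroup A) : Set (List X → A) :=
  {h | ∃ N : ℕ, ∀ v : List X, N < v.length → h v ∈ B}


lemma act_length (g : List X → A) (v : List X) : (act g v).length = v.length := by
  induction v generalizing g with
  | nil => rfl
  | cons x w ih => simp [act, ih]

lemma invAct_length (g : List X → A) (v : List X) : (invAct g v).length = v.length := by
  induction v generalizing g with
  | nil => rfl
  | cons x w ih => simp [invAct, ih]

/-- `H_B` is a self-similar subgroup of `A^{X^*}`, and if `B` is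
a proper subgroup then `H_B` is a proper dense (hence non-closed) subgroup. -/
theorem stmt18 [Finite X] [Nonempty X] [Finite A]
    [TopologicalSpace A] [DiscreteTopology A] (B : Subgroup A) :
    ((fun _ => 1) ∈ HB (X := X) B) ∧
    (∀ g ∈ HB (X := X) B, ∀ h ∈ HB (X := X) B, tmul g h ∈ HB B) ∧
    (∀ g ∈ HB (X := X) B, tinv g ∈ HB B) ∧
    (∀ g ∈ HB (X := X) B, ∀ w : List X, sec g w ∈ HB B) ∧
    (B ≠ ⊤ →
      Dense (HB (X := X) B) ∧ HB (X := X) B ≠ Set.univ ∧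
        ¬ IsClosed (HB (X := X) B)) := by
  refine ⟨⟨0, fun v _ => one_mem B⟩, ?_, ?_, ?_, ?_⟩
  · rintro g ⟨N, hN⟩ h ⟨M, hM⟩
    refine ⟨max N M, fun v hv => mul_mem (hN _ ?_) (hM _ (lt_of_le_of_lt (le_max_right _ _) hv))⟩
    rw [act_length]
    exact lt_of_le_of_lt (le_max_left _ _) hv
  · rintro g ⟨N, hN⟩
    exact ⟨N, fun v hv => inv_mem (hN _ (by rwa [invAct_length]))⟩
  · rintro g ⟨N, hN⟩ w
    refine ⟨N, fun v hv => hN _ ?_⟩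
    simp only [List.length_append]
    omega
  · intro hB
    have hdense : Dense (HB (X := X) B) := by
      intro g
      rw [mem_closure_iff_nhds]
      intro s hs
      rw [nhds_pi, Filter.mem_pi] at hs
      obtain ⟨I, hIfin, t, ht, hsub⟩ := hs
      obtain ⟨N, hN⟩ := (hIfin.image List.length).bddAbove
      refine ⟨fun v => if v.length ≤ N then g v else 1, ?_, ⟨N, fun v hv => ?_⟩⟩
      · apply hsub
        intro v hv
        have hvN : v.length ≤ N := hN (Set.mem_image_of_mem List.length hv)
        simpa [hvN] using mem_of_mem_nhds (ht v)
      · simp [Nat.not_le.2 hv, one_mem]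
    have hne : HB (X := X) B ≠ Set.univ := by
      obtain ⟨a, ha⟩ : ∃ a : A, a ∉ B := by
        by_contra h
        push_neg at h
        exact hB ((Subgroup.eq_top_iff' B).2 h)
      intro h
      have : (fun _ : List X => a) ∈ HB (X := X) B := h ▸ Set.mem_univ _
      obtain ⟨N, hNa⟩ := this
      have x : X := Classical.arbitrary X
      exact ha (hNa (List.replicate (N+1) x) (by simp))
    refine ⟨hdense, hne, fun hcl => ?_⟩
    rw [← hdense.closure_eq, hcl.closure_eq] at hne
    exact hne rfl


end TreeShift
end
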